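/- Simplified negligibility test for the classical full Colombeau algebra: Let Ω ⊆ ℝ^s be open and let R : C_c^∞(ℝ^s,ℝ) × Ω → ℂ be such that for every φ ∈ C_c^∞(ℝ^s,ℝ) the map x ↦ R(φ,x) is smooth on Ω. Assume R is moderate: for every compact K ⊆ Ω and every order n ∈ ℕ there exists N ∈ ℕ such that for every φ ∈ A_N(ℝ^s), sup_{x∈K} ‖iteratedFDeriv n (R(S_ε φ, ·)) (x)‖ = O(ε^{-N}) as ε → 0⁺. If for every compact K ⊆ Ω and every m ∈ ℕ there exists q ∈ ℕ such that for every φ ∈ A_q(ℝ^s), sup_{x∈K} |R(S_ε φ, x)| = O(ε^m) as ε → 0⁺, then for every compact K ⊆ Ω, every order n ∈ ℕ and every m ∈ ℕ there exists q ∈ ℕ such that for every φ ∈ A_q(ℝ^s), sup_{x∈K} ‖iteratedFDeriv n (R(S_ε φ, ·)) (x)‖ = O(ε^m) as ε → 0⁺. -/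

import Mathlib

/-!
Induction on the order `n` of the derivative. For a `C²` function `f` on a closed ball of radius
`h` around `x`, Taylor's formula gives the interpolation inequality
`‖f' x‖ ≤ 2 sup ‖f‖ / h + h sup ‖f''‖`. Apply it to the `n`-th derivative of `R (S_ε φ)` on balls
of radius `h = δ ε^(N+m)` inside a `δ`-neighbourhood `K'` of `K`: the order-`n` negligibility
bound `O(ε^(N+2m))` and the order-`(n+2)` moderateness bound `O(ε^(-N))` on `K'` both turn into
`O(ε^m)`.
-/

open Set MeasureTheory Metric

/-- The scaling operator `S_ε`: `(S_ε φ)(ξ) = ε^{-s} φ(ξ/ε)`. -/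
noncomputable def scaleTest {s : ℕ} (ε : ℝ) (φ : (Fin s → ℝ) → ℝ) : (Fin s → ℝ) → ℝ :=
  fun ξ => (ε ^ s)⁻¹ * φ (ε⁻¹ • ξ)

/-- Membership in `A_q(ℝ^s)`: a smooth compactly supported function with integral `1`
whose moments of orders `1 ≤ |α| ≤ q` vanish. -/
def MemA {s : ℕ} (q : ℕ) (φ : (Fin s → ℝ) → ℝ) : Prop :=
  ContDiff ℝ (⊤ : ℕ∞) φ ∧ HasCompactSupport φ ∧ (∫ ξ, φ ξ) = 1 ∧
  ∀ α : Fin s → ℕ, 1 ≤ ∑ i, α i → (∑ i, α i) ≤ q →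
    (∫ ξ, (∏ i, ξ i ^ α i) * φ ξ) = 0

section Interpolation

variable {E F : Type*} [NormedAddCommGroup E] [NormedSpace ℝ E]
  [NormedAddCommGroup F] [NormedSpace ℝ F]

theorem ContinuousLinearMap.opNorm_le_of_norm_eq {T : E →L[ℝ] F} {r C : ℝ} (hr : 0 < r)
    (hC : 0 ≤ C) (hT : ∀ v, ‖v‖ = r → ‖T v‖ ≤ C) : ‖T‖ ≤ C / r := by
  refine T.opNorm_le_of_unit_norm (div_nonneg hC hr.le) fun v hv => ?_
  have hrv := hT (r • v) (by rw [norm_smul, hv, Real.norm_of_nonneg hr.le, mul_one])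
  rw [map_smul, norm_smul, Real.norm_of_nonneg hr.le] at hrv
  rwa [le_div_iff₀' hr]

theorem LinearIsometryEquiv.norm_toContinuousLinearMap_comp {G H : Type*}
    [SeminormedAddCommGroup G] [NormedSpace ℝ G] [SeminormedAddCommGroup H] [NormedSpace ℝ H]
    (e : G ≃ₗᵢ[ℝ] H) (T : E →L[ℝ] G) : ‖(e : G →L[ℝ] H).comp T‖ = ‖T‖ :=
  e.toLinearIsometry.norm_toContinuousLinearMap_comp

theorem norm_sub_sub_fderiv_le_of_mem_closedBall {f : E → F} {x y : E} {h M : ℝ}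
    (hf : ∀ z ∈ closedBall x h, DifferentiableAt ℝ f z)
    (hf' : ∀ z ∈ closedBall x h, DifferentiableAt ℝ (fderiv ℝ f) z)
    (hM : ∀ z ∈ closedBall x h, ‖fderiv ℝ (fderiv ℝ f) z‖ ≤ M) (hy : y ∈ closedBall x h) :
    ‖f y - f x - fderiv ℝ f x (y - x)‖ ≤ M * h * ‖y - x‖ := by
  have hx : x ∈ closedBall x h := mem_closedBall_self (dist_nonneg.trans hy)
  have hM0 : 0 ≤ M := (norm_nonneg (fderiv ℝ (fderiv ℝ f) x)).trans (hM x hx)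
  have hlip : ∀ z ∈ closedBall x h, ‖fderiv ℝ f z - fderiv ℝ f x‖ ≤ M * h := fun z hz =>
    ((convex_closedBall x h).norm_image_sub_le_of_norm_fderiv_le hf' hM hx hz).trans
      (mul_le_mul_of_nonneg_left (by rwa [← dist_eq_norm]) hM0)
  exact (convex_closedBall x h).norm_image_sub_le_of_norm_hasFDerivWithin_le'
    (fun z hz => (hf z hz).hasFDerivAt.hasFDerivWithinAt) hlip hx hy

theorem norm_fderiv_le_of_closedBall {f : E → F} {x : E} {h A M : ℝ} (hh : 0 < h)
    (hf : ∀ z ∈ closedBall x h, DifferentiableAt ℝ f z)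
    (hf' : ∀ z ∈ closedBall x h, DifferentiableAt ℝ (fderiv ℝ f) z)
    (hA : ∀ z ∈ closedBall x h, ‖f z‖ ≤ A)
    (hM : ∀ z ∈ closedBall x h, ‖fderiv ℝ (fderiv ℝ f) z‖ ≤ M) :
    ‖fderiv ℝ f x‖ ≤ 2 * A / h + M * h := by
  have hx : x ∈ closedBall x h := mem_closedBall_self hh.le
  have hA0 : 0 ≤ A := (norm_nonneg _).trans (hA x hx)
  have hM0 : 0 ≤ M := (norm_nonneg (fderiv ℝ (fderiv ℝ f) x)).trans (hM x hx)
  have hsphere : ∀ v : E, ‖v‖ = h → ‖fderiv ℝ f x v‖ ≤ 2 * A + M * h * h := by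
    intro v hv
    have hy : x + v ∈ closedBall x h := by simp [hv]
    have htaylor := norm_sub_sub_fderiv_le_of_mem_closedBall hf hf' hM hy
    rw [add_sub_cancel_left, hv] at htaylor
    calc ‖fderiv ℝ f x v‖ = ‖(f (x + v) - f x) - (f (x + v) - f x - fderiv ℝ f x v)‖ := by
          rw [sub_sub_cancel]
      _ ≤ ‖f (x + v)‖ + ‖f x‖ + M * h * h :=
          (norm_sub_le _ _).trans (add_le_add (norm_sub_le _ _) htaylor)
      _ ≤ 2 * A + M * h * h := by linarith [hA _ hy, hA x hx]
  calc ‖fderiv ℝ f x‖ ≤ (2 * A + M * h * h) / h :=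
        (fderiv ℝ f x).opNorm_le_of_norm_eq hh (by positivity) hsphere
    _ = 2 * A / h + M * h := by field_simp

theorem norm_iteratedFDeriv_succ_le_of_closedBall {g : E → F} {n : ℕ} {x : E} {h A M : ℝ}
    (hh : 0 < h) (hg : ∀ z ∈ closedBall x h, ContDiffAt ℝ (n + 2) g z)
    (hA : ∀ z ∈ closedBall x h, ‖iteratedFDeriv ℝ n g z‖ ≤ A)
    (hM : ∀ z ∈ closedBall x h, ‖iteratedFDeriv ℝ (n + 2) g z‖ ≤ M) :
    ‖iteratedFDeriv ℝ (n + 1) g x‖ ≤ 2 * A / h + M * h := by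
  have hdiff : ∀ k < n + 2, ∀ z ∈ closedBall x h, DifferentiableAt ℝ (iteratedFDeriv ℝ k g) z :=
    fun k hk z hz => (hg z hz).differentiableAt_iteratedFDeriv (by exact_mod_cast hk)
  rw [← norm_fderiv_iteratedFDeriv]
  refine norm_fderiv_le_of_closedBall hh (hdiff n (by omega)) (fun z hz => ?_) hA (fun z hz => ?_)
  · rw [fderiv_iteratedFDeriv, LinearIsometryEquiv.comp_differentiableAt_iff]
    exact hdiff (n + 1) (by omega) z hz
  · rw [fderiv_iteratedFDeriv, LinearIsometryEquiv.comp_fderiv,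
      LinearIsometryEquiv.norm_toContinuousLinearMap_comp]
    exact norm_fderiv_iteratedFDeriv.trans_le (hM z hz)

end Interpolation

section Colombeau

variable {s : ℕ}

theorem MemA.mono {q q' : ℕ} {φ : (Fin s → ℝ) → ℝ} (hφ : MemA q φ) (hqq : q' ≤ q) :
    MemA q' φ :=
  ⟨hφ.1, hφ.2.1, hφ.2.2.1, fun α h1 h2 => hφ.2.2.2 α h1 (h2.trans hqq)⟩

theorem ContDiff.scaleTest {φ : (Fin s → ℝ) → ℝ} (hφ : ContDiff ℝ (⊤ : ℕ∞) φ) (ε : ℝ) :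
    ContDiff ℝ (⊤ : ℕ∞) (scaleTest ε φ) :=
  contDiff_const.mul (hφ.comp (contDiff_const_smul ε⁻¹))

theorem HasCompactSupport.scaleTest {φ : (Fin s → ℝ) → ℝ} (hφ : HasCompactSupport φ) {ε : ℝ}
    (hε : ε ≠ 0) : HasCompactSupport (scaleTest ε φ) := by
  have hcomp : _root_.scaleTest ε φ =
      ((fun _ => (ε ^ s)⁻¹) * φ) ∘ Homeomorph.smulOfNeZero ε⁻¹ (inv_ne_zero hε) := rfl
  rw [hcomp]
  exact hφ.mul_left.comp_homeomorph _

def IsBigOPowOn {X : Type*} (K : Set X) (p : ℝ) (a : ℝ → X → ℝ) : Prop :=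
  ∃ C > (0:ℝ), ∃ ε₀ ∈ Ioc (0:ℝ) 1, ∀ ε ∈ Ioo (0:ℝ) ε₀, ∀ x ∈ K, a ε x ≤ C * ε ^ p

def NegligibleDerivOn (Ω : Set (Fin s → ℝ)) (R : ((Fin s → ℝ) → ℝ) → (Fin s → ℝ) → ℂ)
    (n : ℕ) : Prop :=
  ∀ K ⊆ Ω, IsCompact K → ∀ m : ℕ, ∃ q : ℕ, ∀ φ, MemA q φ →
    IsBigOPowOn K m fun ε x => ‖iteratedFDeriv ℝ n (R (scaleTest ε φ)) x‖

def ModerateDerivOn (Ω : Set (Fin s → ℝ)) (R : ((Fin s → ℝ) → ℝ) → (Fin s → ℝ) → ℂ)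
    (n : ℕ) : Prop :=
  ∀ K ⊆ Ω, IsCompact K → ∃ N : ℕ, ∀ φ, MemA N φ →
    IsBigOPowOn K (-(N : ℝ)) fun ε x => ‖iteratedFDeriv ℝ n (R (scaleTest ε φ)) x‖

theorem NegligibleDerivOn.succ {Ω : Set (Fin s → ℝ)} (hΩ : IsOpen Ω)
    {R : ((Fin s → ℝ) → ℝ) → (Fin s → ℝ) → ℂ}
    (hsmooth : ∀ φ : (Fin s → ℝ) → ℝ, ContDiff ℝ (⊤ : ℕ∞) φ → HasCompactSupport φ →
      ContDiffOn ℝ (⊤ : ℕ∞) (R φ) Ω)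
    {n : ℕ} (hneg : NegligibleDerivOn Ω R n) (hmod : ModerateDerivOn Ω R (n + 2)) :
    NegligibleDerivOn Ω R (n + 1) := by
  intro K hKΩ hK m
  obtain ⟨δ, hδ, hKδ⟩ := hK.exists_cthickening_subset_open hΩ hKΩ
  obtain ⟨N, hN⟩ := hmod _ hKδ hK.cthickening
  obtain ⟨q, hq⟩ := hneg _ hKδ hK.cthickening (N + 2 * m)
  refine ⟨max q N, fun φ hφ => ?_⟩
  obtain ⟨C₁, hC₁, ε₁, hε₁, H₁⟩ := hq φ (hφ.mono (le_max_left _ _))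
  obtain ⟨C₂, hC₂, ε₂, hε₂, H₂⟩ := hN φ (hφ.mono (le_max_right _ _))
  refine ⟨2 * C₁ / δ + C₂ * δ, by positivity, min ε₁ ε₂,
    ⟨lt_min hε₁.1 hε₂.1, (min_le_left _ _).trans hε₁.2⟩, ?_⟩
  rintro ε ⟨hε0, hε⟩ x hx
  rw [lt_min_iff] at hε
  -- this radius makes both terms of the interpolation inequality `O(ε^m)`
  set h := δ * ε ^ (N + m)
  have hball : closedBall x h ⊆ cthickening δ K :=
    (closedBall_subset_closedBall (mul_le_of_le_one_right hδ.le
      (pow_le_one₀ hε0.le (hε.1.trans_le hε₁.2).le))).trans (closedBall_subset_cthickening hx δ)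
  have hRφ := hsmooth _ (hφ.1.scaleTest ε) (hφ.2.1.scaleTest hε0.ne')
  calc ‖iteratedFDeriv ℝ (n + 1) (R (scaleTest ε φ)) x‖
      ≤ 2 * (C₁ * ε ^ ((N + 2 * m : ℕ) : ℝ)) / h + C₂ * ε ^ (-(N : ℝ)) * h :=
        norm_iteratedFDeriv_succ_le_of_closedBall (by positivity)
          (fun z hz => (hRφ.contDiffAt (hΩ.mem_nhds (hKδ (hball hz)))).of_le
            (WithTop.coe_le_coe.2 le_top))
          (fun z hz => H₁ ε ⟨hε0, hε.1⟩ z (hball hz)) (fun z hz => H₂ ε ⟨hε0, hε.2⟩ z (hball hz))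
    _ = (2 * C₁ / δ + C₂ * δ) * ε ^ (m : ℝ) := by
        simp only [h, Real.rpow_natCast, Real.rpow_neg hε0.le]
        field_simp
        ring

end Colombeau

/-- **Simplified negligibility test for the classical full Colombeau algebra.**
For a moderate `R`, zeroth-order negligibility estimates (on each compact set, for each
order `m`, with test functions from a suitable `A_q`) imply the negligibility estimates
for all derivatives. -/
theorem simplified_negligibility_full_algebra {s : ℕ}
    (Ω : Set (Fin s → ℝ)) (hΩ : IsOpen Ω)
    (R : ((Fin s → ℝ) → ℝ) → (Fin s → ℝ) → ℂ)
    (hsmooth : ∀ φ : (Fin s → ℝ) → ℝ, ContDiff ℝ (⊤ : ℕ∞) φ → HasCompactSupport φ →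
      ContDiffOn ℝ (⊤ : ℕ∞) (R φ) Ω)
    (hmoderate : ∀ K : Set (Fin s → ℝ), K ⊆ Ω → IsCompact K → ∀ n : ℕ, ∃ N : ℕ,
      ∀ φ : (Fin s → ℝ) → ℝ, MemA N φ →
        ∃ C > (0:ℝ), ∃ ε₀ ∈ Ioc (0:ℝ) 1, ∀ ε ∈ Ioo (0:ℝ) ε₀, ∀ x ∈ K,
          ‖iteratedFDeriv ℝ n (R (scaleTest ε φ)) x‖ ≤ C * ε ^ (-(N:ℝ)))
    (hzero : ∀ K : Set (Fin s → ℝ), K ⊆ Ω → IsCompact K → ∀ m : ℕ, ∃ q : ℕ,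
      ∀ φ : (Fin s → ℝ) → ℝ, MemA q φ →
        ∃ C > (0:ℝ), ∃ ε₀ ∈ Ioc (0:ℝ) 1, ∀ ε ∈ Ioo (0:ℝ) ε₀, ∀ x ∈ K,
          ‖R (scaleTest ε φ) x‖ ≤ C * ε ^ (m:ℝ)) :
    ∀ K : Set (Fin s → ℝ), K ⊆ Ω → IsCompact K → ∀ n : ℕ, ∀ m : ℕ, ∃ q : ℕ,
      ∀ φ : (Fin s → ℝ) → ℝ, MemA q φ →
        ∃ C > (0:ℝ), ∃ ε₀ ∈ Ioc (0:ℝ) 1, ∀ ε ∈ Ioo (0:ℝ) ε₀, ∀ x ∈ K,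
          ‖iteratedFDeriv ℝ n (R (scaleTest ε φ)) x‖ ≤ C * ε ^ (m:ℝ) := by
  have hneg : ∀ n, NegligibleDerivOn Ω R n := by
    intro n
    induction n with
    | zero => simpa only [NegligibleDerivOn, IsBigOPowOn, norm_iteratedFDeriv_zero] using hzero
    | succ n ih => exact ih.succ hΩ hsmooth fun K hKΩ hK => hmoderate K hKΩ hK (n + 2)
  exact fun K hKΩ hK n => hneg n K hKΩ hK
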